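/- Let f : ℝ² → ℝ² be a Lipschitz continuous vector field with flow φ_f, let g : ℝ² → ℝ be continuously differentiable, and let G = {x ∈ ℝ² | g(x) = 0}. For any point x with g(x) < 0 whose return time τ_{f,G}(x) is finite, the first crossing point y = P_{f,G}(x) satisfies ∇g(y)·f(y) ≥ 0; i.e., at the first intersection with the switching surface starting from the region {g ≤ 0}, the quantity ∇g(P_{f,G}(x))·f(P_{f,G}(x)) cannot be negative. -/

import Mathlib

open scoped RealInnerProductSpace
open Filter Topology

noncomputable section

/-- The planar state space ℝ². -/
abbrev State := EuclideanSpace ℝ (Fin 2)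

/-- `φ` is the flow of the vector field `f` : `φ x 0 = x` and `∂φ(x,t)/∂t = f (φ x t)`. -/
def IsFlow (f : State → State) (φ : State → ℝ → State) : Prop :=
  (∀ x, φ x 0 = x) ∧ ∀ x t, HasDerivAt (fun u => φ x u) (f (φ x t)) t

/-- The set of positive times at which the flow starting at `x` lies in `U`. -/
def hitTimes (φ : State → ℝ → State) (U : Set State) (x : State) : Set ℝ :=
  {t : ℝ | 0 < t ∧ φ x t ∈ U}

/-- The return time `τ_{f,U}(x)` is finite. -/
def hits (φ : State → ℝ → State) (U : Set State) (x : State) : Prop :=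
  (hitTimes φ U x).Nonempty

/-- The return time `τ_{f,U}(x)` (a real number, junk value if the set is empty). -/
def retTime (φ : State → ℝ → State) (U : Set State) (x : State) : ℝ :=
  sInf (hitTimes φ U x)

/-- The return time `τ_{f,U}(x)` as an extended real (`⊤` if the flow never returns to `U`). -/
def retTimeE (φ : State → ℝ → State) (U : Set State) (x : State) : EReal :=
  sInf (Real.toEReal '' hitTimes φ U x)

/-- The Poincaré map `P_{f,U}(x) = φ(x, τ_{f,U}(x))`. -/
def pMap (φ : State → ℝ → State) (U : Set State) (x : State) : State :=
  φ x (retTime φ U x)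

/-- `y` is a globally asymptotically stable equilibrium for the flow `φ`. -/
def IsGASFlow (φ : State → ℝ → State) (y : State) : Prop :=
  (∀ ε > 0, ∃ δ > 0, ∀ x : State, ‖x - y‖ < δ → ∀ t : ℝ, 0 ≤ t → ‖φ x t - y‖ < ε) ∧
  (∀ x : State, Tendsto (fun t => φ x t) atTop (𝓝 y))

/-- The two modes of a bi-modal hybrid automaton. -/
inductive Mode | one | two
deriving DecidableEq

/-- The other mode (target of the unique transition out of a mode). -/
def Mode.other : Mode → Mode
  | .one => .two
  | .two => .one

/-- A planar bi-modal hybrid automaton, with its two flows, and a unique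
equilibrium `x*` of mode 1 lying in the interior of `Dom 1`. -/
structure BMHA where
  f1 : State → State
  f2 : State → State
  g : State → ℝ
  φ1 : State → ℝ → State
  φ2 : State → ℝ → State
  lip1 : ∃ K, LipschitzWith K f1
  lip2 : ∃ K, LipschitzWith K f2
  g_smooth : ContDiff ℝ 1 g
  flow1 : IsFlow f1 φ1
  flow2 : IsFlow f2 φ2
  xstar : State
  equilibrium : f1 xstar = 0
  xstar_interior : g xstar < 0

/-- The vector field of each mode. -/
def BMHA.field (S : BMHA) : Mode → State → State
  | .one => S.f1
  | .two => S.f2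

/-- The flow of each mode. -/
def BMHA.flow (S : BMHA) : Mode → State → ℝ → State
  | .one => S.φ1
  | .two => S.φ2

/-- The domain of each mode: `Dom 1 = {g ≤ 0}`, `Dom 2 = {g ≥ 0}`. -/
def BMHA.Dom (S : BMHA) : Mode → Set State
  | .one => {x | S.g x ≤ 0}
  | .two => {x | 0 ≤ S.g x}

/-- The switching surface `G = {g = 0}`. -/
def BMHA.Gset (S : BMHA) : Set State := {x | S.g x = 0}

/-- The guard of the unique transition out of mode `q`:
`Guard (1→2) = {g ≥ 0}`, `Guard (2→1) = {g ≤ 0}`. -/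
def BMHA.Guard (S : BMHA) : Mode → Set State
  | .one => {x | 0 ≤ S.g x}
  | .two => {x | S.g x ≤ 0}

/-- A point of a hybrid trajectory: mode, time, state. -/
abbrev HPoint := Mode × ℝ × State

/-- The data of a (finite) hybrid trajectory of the transition-delayed automaton `S_H`:
times `t 0 < t 1 < ⋯ < t J`, modes `q j`, initial states `xs j` of each segment, and
delays `h j ∈ [0, H]`; on segment `j` the state follows the flow of mode `q j`, stays in
`Dom (q j)` until `t (j+1) - h j`, at which time it is in the guard of the transition
`(q j, q (j+1))`, and stays in that guard during the final `h j` time units, after which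
the (identity-reset) transition to the alternate mode occurs. -/
structure TrajSpec (S : BMHA) (H : ℝ) where
  J : ℕ
  Jpos : 0 < J
  t : ℕ → ℝ
  q : ℕ → Mode
  xs : ℕ → State
  h : ℕ → ℝ
  t_mono : ∀ j, j < J → t j < t (j + 1)
  h_nonneg : ∀ j, j + 1 < J → 0 ≤ h j
  h_le : ∀ j, j + 1 < J → h j ≤ H
  h_bound : ∀ j, j + 1 < J → t j ≤ t (j + 1) - h j
  alternate : ∀ j, j + 1 < J → q (j + 1) = (q j).other
  inDom : ∀ j, j + 1 < J → ∀ u ∈ Set.Icc (t j) (t (j + 1) - h j),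
    S.flow (q j) (xs j) (u - t j) ∈ S.Dom (q j)
  inGuard : ∀ j, j + 1 < J → ∀ u ∈ Set.Icc (t (j + 1) - h j) (t (j + 1)),
    S.flow (q j) (xs j) (u - t j) ∈ S.Guard (q j)
  reset : ∀ j, j + 1 < J → xs (j + 1) = S.flow (q j) (xs j) (t (j + 1) - t j)
  lastDom : ∀ u ∈ Set.Icc (t (J - 1)) (t J),
    S.flow (q (J - 1)) (xs (J - 1)) (u - t (J - 1)) ∈ S.Dom (q (J - 1))

/-- The hybrid trajectory (a subset of `Q × ℝ × ℝ²`) described by trajectory data. -/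
def TrajSpec.toSet {S : BMHA} {H : ℝ} (D : TrajSpec S H) : Set HPoint :=
  {p | ∃ j < D.J, p.1 = D.q j ∧ p.2.1 ∈ Set.Icc (D.t j) (D.t (j + 1)) ∧
    p.2.2 = S.flow (D.q j) (D.xs j) (p.2.1 - D.t j)}

/-- `T` is a hybrid trajectory of the transition-delayed automaton `S_H`. -/
def IsDelayedTraj (S : BMHA) (H : ℝ) (T : Set HPoint) : Prop :=
  ∃ D : TrajSpec S H, T = D.toSet

/-- The data of a complete (indefinitely extended) hybrid trajectory of `S_H`;
either infinitely many transitions (`J = ⊤`, with divergent transition times), or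
finitely many, followed by a final segment defined for all subsequent times. -/
structure CTrajSpec (S : BMHA) (H : ℝ) where
  J : ℕ∞
  Jpos : 1 ≤ J
  t : ℕ → ℝ
  q : ℕ → Mode
  xs : ℕ → State
  h : ℕ → ℝ
  t_mono : ∀ j : ℕ, ((j : ℕ∞) + 1) < J → t j < t (j + 1)
  h_nonneg : ∀ j : ℕ, ((j : ℕ∞) + 1) < J → 0 ≤ h j
  h_le : ∀ j : ℕ, ((j : ℕ∞) + 1) < J → h j ≤ H
  h_bound : ∀ j : ℕ, ((j : ℕ∞) + 1) < J → t j ≤ t (j + 1) - h j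
  alternate : ∀ j : ℕ, ((j : ℕ∞) + 1) < J → q (j + 1) = (q j).other
  inDom : ∀ j : ℕ, ((j : ℕ∞) + 1) < J → ∀ u ∈ Set.Icc (t j) (t (j + 1) - h j),
    S.flow (q j) (xs j) (u - t j) ∈ S.Dom (q j)
  inGuard : ∀ j : ℕ, ((j : ℕ∞) + 1) < J → ∀ u ∈ Set.Icc (t (j + 1) - h j) (t (j + 1)),
    S.flow (q j) (xs j) (u - t j) ∈ S.Guard (q j)
  reset : ∀ j : ℕ, ((j : ℕ∞) + 1) < J → xs (j + 1) = S.flow (q j) (xs j) (t (j + 1) - t j)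
  nonZeno : J = ⊤ → Tendsto t atTop atTop
  lastDom : ∀ n : ℕ, J = (n : ℕ∞) + 1 → ∀ u : ℝ, t n ≤ u →
    S.flow (q n) (xs n) (u - t n) ∈ S.Dom (q n)

/-- The set of (mode, time, state) points of a complete trajectory. -/
def CTrajSpec.toSet {S : BMHA} {H : ℝ} (D : CTrajSpec S H) : Set HPoint :=
  {p | ∃ j : ℕ, ((j : ℕ∞) + 1) ≤ D.J ∧ p.1 = D.q j ∧ D.t j ≤ p.2.1 ∧
    (((j : ℕ∞) + 1) < D.J → p.2.1 ≤ D.t (j + 1)) ∧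
    p.2.2 = S.flow (D.q j) (D.xs j) (p.2.1 - D.t j)}

/-- The state along the complete trajectory converges to `y` as time tends to infinity. -/
def CTrajSpec.convergesTo {S : BMHA} {H : ℝ} (D : CTrajSpec S H) (y : State) : Prop :=
  ∀ ε > 0, ∃ τ : ℝ, ∀ p ∈ D.toSet, τ ≤ p.2.1 → ‖p.2.2 - y‖ < ε

/-- `x*` is a globally asymptotically stable equilibrium of `S_H`: trajectories starting
near `x*` stay near `x*`, and every complete trajectory converges to `x*`. -/
def IsGAS (S : BMHA) (H : ℝ) : Prop :=
  (∀ ε > 0, ∃ δ > 0,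
    (∀ D : TrajSpec S H, ‖D.xs 0 - S.xstar‖ < δ →
      ∀ p ∈ D.toSet, ‖p.2.2 - S.xstar‖ < ε) ∧
    (∀ D : CTrajSpec S H, ‖D.xs 0 - S.xstar‖ < δ →
      ∀ p ∈ D.toSet, ‖p.2.2 - S.xstar‖ < ε)) ∧
  (∀ D : CTrajSpec S H, D.convergesTo S.xstar)

/-- A hybrid trajectory `T` is a closed orbit: there are `(q₀,t₀,x₀), (q̃,t̃,x̃), (q̄,t̄,x̄) ∈ T`
with `q̄ = q₀`, `t₀ < t̃ < t̄`, `x̃ ≠ x̄` and `x̄ = x₀`. -/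
def IsClosedOrbit (T : Set HPoint) : Prop :=
  ∃ p0 pm pe : HPoint, p0 ∈ T ∧ pm ∈ T ∧ pe ∈ T ∧
    pe.1 = p0.1 ∧ p0.2.1 < pm.2.1 ∧ pm.2.1 < pe.2.1 ∧ pm.2.2 ≠ pe.2.2 ∧ pe.2.2 = p0.2.2

/-- The transition-delayed automaton `S_H` admits a closed orbit. -/
def AdmitsClosedOrbit (S : BMHA) (H : ℝ) : Prop :=
  ∃ T : Set HPoint, IsDelayedTraj S H T ∧ IsClosedOrbit T

/-- `π(T)`: the set of states visited by the trajectory `T`. -/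
def projT (T : Set HPoint) : Set State := {x | ∃ q t, (q, t, x) ∈ T}

/-- `T|_{[a,b]}`: restriction of the trajectory to a time interval. -/
def restr (T : Set HPoint) (a b : ℝ) : Set HPoint := {p ∈ T | a ≤ p.2.1 ∧ p.2.1 ≤ b}

/-- `T|_{[a,∞)}`: restriction of the trajectory to all times `≥ a`. -/
def restrFrom (T : Set HPoint) (a : ℝ) : Set HPoint := {p ∈ T | a ≤ p.2.1}

/-- `τ_T(U, t₀) = inf {t | (q,t,x) ∈ T, t > t₀, x ∈ U}`. -/
def tauT (T : Set HPoint) (U : Set State) (t0 : ℝ) : ℝ :=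
  sInf {t : ℝ | ∃ p ∈ T, p.2.1 = t ∧ t0 < t ∧ p.2.2 ∈ U}

/-- `P_T(U, t₀) = {(q,t,x) ∈ T | t = τ_T(U, t₀)}`: the first intersection of `T`
with `U` after time `t₀`. -/
def PT (T : Set HPoint) (U : Set State) (t0 : ℝ) : Set HPoint :=
  {p ∈ T | p.2.1 = tauT T U t0}

/-- `[x,y]_X`: the union of all paths in `X` from `x` to `y`. -/
def pathsBetween (X : Set State) (x y : State) : Set State :=
  {z | ∃ γ : Path x y, (∀ u, γ u ∈ X) ∧ ∃ u, γ u = z}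

/-- `U` is a path component of `X`. -/
def IsPathComponentOf (U X : Set State) : Prop :=
  ∃ x ∈ X, U = pathComponentIn X x

/-- The Poincaré curve `S_p = {x | s x = 0, ∇s(x)·f₁(x) > 0}` determined by `s`. -/
def PCurve (f1 : State → State) (s : State → ℝ) : Set State :=
  {x | s x = 0 ∧ 0 < ⟪gradient s x, f1 x⟫}

/-- `s` defines a Poincaré curve for the field `f1`: `s` is continuously differentiable and
the curve is disjoint from the switching surface `{g = 0}`. -/
def IsPCurveFor (f1 : State → State) (g s : State → ℝ) : Prop :=
  ContDiff ℝ 1 s ∧ PCurve f1 s ∩ {x | g x = 0} = ∅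

/-- Assumption 1: `S_p` has a single path component, `cl(S_p) = S_p ∪ {x*}`, and the
Euclidean norm restricted to `S_p` is injective. -/
def Assumption1 (f1 : State → State) (s : State → ℝ) (xstar : State) : Prop :=
  IsPathConnected (PCurve f1 s) ∧
  closure (PCurve f1 s) = PCurve f1 s ∪ {xstar} ∧
  Set.InjOn (fun x : State => ‖x‖) (PCurve f1 s)

/-- `G̃ = {x ∈ G | ∇g(x)·f₂(x) < 0}`. -/
def BMHA.Gtilde (S : BMHA) : Set State :=
  {x | S.g x = 0 ∧ ⟪gradient S.g x, S.f2 x⟫ < 0}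

/-- `T₂ = inf_{x ∈ G̃} τ_{f₂,S_p}(x)` (an extended real). -/
def T2 (S : BMHA) (s : State → ℝ) : EReal :=
  ⨅ x ∈ S.Gtilde, retTimeE S.φ2 (PCurve S.f1 s) x

/-- `D = {φ_{f₂}(x,h) | x ∈ G̃, 0 ≤ h < T₂}`. -/
def Dset (S : BMHA) (s : State → ℝ) : Set State :=
  {y | ∃ x ∈ S.Gtilde, ∃ hd : ℝ, 0 ≤ hd ∧ (hd : EReal) < T2 S s ∧ y = S.φ2 x hd}

/-- Assumption 2: for every `x ∈ D`, `τ_{f₁,S_p}(x)` is finite and smaller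
than `τ_{f₁,G}(x)`. -/
def Assumption2 (S : BMHA) (s : State → ℝ) : Prop :=
  ∀ x ∈ Dset S s, hits S.φ1 (PCurve S.f1 s) x ∧
    ((retTime S.φ1 (PCurve S.f1 s) x : EReal) < retTimeE S.φ1 S.Gset x)

/-- Assumption 3: for every `x` in the interior of `Dom 2`, the point `y = P_{f₂,G}(x)`
is defined and satisfies `∇g(y)·f₂(y) ≠ 0`. -/
def Assumption3 (S : BMHA) : Prop :=
  ∀ x ∈ interior {y : State | 0 ≤ S.g y}, hits S.φ2 S.Gset x ∧
    ⟪gradient S.g (pMap S.φ2 S.Gset x), S.f2 (pMap S.φ2 S.Gset x)⟫ ≠ 0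

/-- `S̃_p = {x ∈ S_p | τ_{f₁,G}(x) finite, ∇g(P_{f₁,G}(x))·f₁(P_{f₁,G}(x)) > 0}`. -/
def SpTilde (S : BMHA) (s : State → ℝ) : Set State :=
  {x ∈ PCurve S.f1 s | hits S.φ1 S.Gset x ∧
    0 < ⟪gradient S.g (pMap S.φ1 S.Gset x), S.f1 (pMap S.φ1 S.Gset x)⟫}

/-- Assumption 4: for every `x ∈ S̃_p`, the point `y = P_{f₁,G}(x)` satisfies
`∇g(y)·f₁(y) ≠ 0`. -/
def Assumption4 (S : BMHA) (s : State → ℝ) : Prop :=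
  ∀ x ∈ SpTilde S s,
    ⟪gradient S.g (pMap S.φ1 S.Gset x), S.f1 (pMap S.φ1 S.Gset x)⟫ ≠ 0

/-- The delayed Poincaré map `H^{h₁,h₂}(x₀) = P_{f₁,S_p}(x₄)` where
`x₁ = P_{f₁,G}(x₀)`, `x₂ = φ_{f₁}(x₁,h₁)`, `x₃ = P_{f₂,G}(x₂)`, `x₄ = φ_{f₂}(x₃,h₂)`. -/
def dpm (S : BMHA) (s : State → ℝ) (h1 h2 : ℝ) (x0 : State) : State :=
  pMap S.φ1 (PCurve S.f1 s)
    (S.φ2 (pMap S.φ2 S.Gset (S.φ1 (pMap S.φ1 S.Gset x0) h1)) h2)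

/-- The maximum stable delay `σ(S) = sup {H ≥ 0 | x* is a GAS equilibrium of S_H}`. -/
def sigmaMSD (S : BMHA) : EReal :=
  sSup (Real.toEReal '' {H : ℝ | 0 ≤ H ∧ IsGAS S H})

/-- `σ̂(S) = inf {H ≥ 0 | S_H admits a closed orbit}`. -/
def sigmaHat (S : BMHA) : EReal :=
  sInf (Real.toEReal '' {H : ℝ | 0 ≤ H ∧ AdmitsClosedOrbit S H})

/-! The function `h t = g (φ x t)` is negative at `t = 0` and, by the intermediate value theorem,
stays negative up to its first positive zero `τ`, the return time to `G`. A differentiable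
function that vanishes at `τ` after being negative just before it has a nonnegative derivative
there, and by the chain rule that derivative is `∇g(φ x τ) · f(φ x τ)`. -/

open Set

theorem HasDerivAt.nonneg_of_le_of_mem_Ioo {h : ℝ → ℝ} {d a b : ℝ} (hd : HasDerivAt h d b)
    (hab : a < b) (hle : ∀ t ∈ Ioo a b, h t ≤ h b) : 0 ≤ d := by
  have hslope : Tendsto (slope h b) (𝓝[<] b) (𝓝 d) :=
    (hasDerivAt_iff_tendsto_slope.1 hd).mono_left (nhdsWithin_mono _ fun _ ht => ne_of_lt ht)
  refine ge_of_tendsto hslope ?_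
  filter_upwards [Ioo_mem_nhdsLT hab] with t ht
  rw [slope_def_field]
  exact div_nonneg_of_nonpos (sub_nonpos.2 (hle t ht)) (sub_nonpos.2 ht.2.le)

section FirstZero

variable {h : ℝ → ℝ}

theorem neg_of_lt_sInf_zeros (hc : Continuous h) (h0 : h 0 < 0) {t : ℝ} (ht0 : 0 ≤ t)
    (ht : t < sInf {s | 0 < s ∧ h s = 0}) : h t < 0 := by
  by_contra! hge
  obtain ⟨s, hs, hs0⟩ := intermediate_value_Icc ht0 hc.continuousOn ⟨h0.le, hge⟩
  have hspos : 0 < s := hs.1.lt_of_ne (by rintro rfl; exact h0.ne hs0)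
  have : sInf {s | 0 < s ∧ h s = 0} ≤ s := csInf_le ⟨0, fun _ hr => hr.1.le⟩ ⟨hspos, hs0⟩
  linarith [hs.2]

theorem map_sInf_zeros (hc : Continuous h) (hne : {s | 0 < s ∧ h s = 0}.Nonempty) :
    h (sInf {s | 0 < s ∧ h s = 0}) = 0 :=
  closure_minimal (fun _ hs => hs.2) (isClosed_singleton.preimage hc)
    (csInf_mem_closure hne ⟨0, fun _ hs => hs.1.le⟩)

theorem sInf_zeros_pos (hc : Continuous h) (h0 : h 0 < 0)
    (hne : {s | 0 < s ∧ h s = 0}.Nonempty) : 0 < sInf {s | 0 < s ∧ h s = 0} :=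
  (le_csInf hne fun _ hs => hs.1.le).lt_of_ne fun hτ => h0.ne (by
    simpa only [← hτ] using map_sInf_zeros hc hne)

end FirstZero

theorem IsFlow.hasDerivAt_comp {f : State → State} {φ : State → ℝ → State} (hφ : IsFlow f φ)
    {g : State → ℝ} (x : State) {t : ℝ} (hg : DifferentiableAt ℝ g (φ x t)) :
    HasDerivAt (fun u => g (φ x u)) ⟪gradient g (φ x t), f (φ x t)⟫ t :=
  hg.hasGradientAt.hasFDerivAt.comp_hasDerivAt t (hφ.2 x t)

theorem first_crossing_nonneg_general (f : State → State) (φ : State → ℝ → State)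
    (hφ : IsFlow f φ)
    (g : State → ℝ) (hg : ContDiff ℝ 1 g)
    (x : State) (hx : g x < 0) (hfin : hits φ {y | g y = 0} x) :
    0 ≤ ⟪gradient g (pMap φ {y | g y = 0} x), f (pMap φ {y | g y = 0} x)⟫ := by
  have hgd : Differentiable ℝ g := hg.differentiable one_ne_zero
  have hc : Continuous fun t => g (φ x t) :=
    continuous_iff_continuousAt.2 fun t => (hφ.hasDerivAt_comp x (hgd _)).continuousAt
  have h0 : g (φ x 0) < 0 := by rwa [hφ.1 x]
  refine (hφ.hasDerivAt_comp x (hgd _)).nonneg_of_le_of_mem_Ioo (sInf_zeros_pos hc h0 hfin)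
    fun t ht => ?_
  exact (neg_of_lt_sInf_zeros hc h0 ht.1.le ht.2).le.trans_eq (map_sInf_zeros hc hfin).symm

/-- at the first crossing of the switching surface from the region
`{g ≤ 0}`, the quantity `∇g(P_{f,G}(x))·f(P_{f,G}(x))` cannot be negative. -/
theorem first_crossing_nonneg (f : State → State) (φ : State → ℝ → State)
    (hlip : ∃ K, LipschitzWith K f) (hφ : IsFlow f φ)
    (g : State → ℝ) (hg : ContDiff ℝ 1 g)
    (x : State) (hx : g x < 0) (hfin : hits φ {y | g y = 0} x) :
    0 ≤ ⟪gradient g (pMap φ {y | g y = 0} x), f (pMap φ {y | g y = 0} x)⟫ :=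
  first_crossing_nonneg_general f φ hφ g hg x hx hfin
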